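/- If the weight function w(i,j) is positive and increasing as a function of j (for each fixed i), then the minimal cost function b is non-decreasing: b(n-1) ≤ b(n) for all n ≥ 2. -/

import Mathlib

/-
Take an optimal first jump `n → k` for `b(n)`. If `k = n - 1`, then `b(n) = w(n-1,n) + b(n-1) > b(n-1)`.
Otherwise `k < n - 1` is also an admissible first jump from `n - 1`, and monotonicity of `w(k, ·)` gives
`b(n-1) ≤ w(k,n-1) + b(k) < w(k,n) + b(k) = b(n)`.
-/

/-- Minimal cost `b(n)` of a jumping pattern from `n` down to `1`:
`b(1)=0` and `b(n) = min_{1 <= k < n} (w(k,n) + b(k))`. -/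
noncomputable def minCost (w : ℕ → ℕ → ℝ) : ℕ → ℝ
  | 0 => 0
  | 1 => 0
  | (n+2) =>
    ((Finset.Icc 1 (n+1)).attach).inf'
      ⟨⟨1, by simp⟩, Finset.mem_attach _ _⟩
      (fun k => w k.1 (n+2) + minCost w k.1)
decreasing_by
  have := Finset.mem_Icc.mp k.2; omega

/-- The lexicographically-first cost-minimizing jump sequence. -/
noncomputable def jumpSeq (w : ℕ → ℕ → ℝ) : ℕ → ℕ := fun n =>
  if n ≤ 1 then 1
  else sInf {k | 1 ≤ k ∧ k < n ∧ w k n + minCost w k = minCost w n}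

lemma minCost_le_of_lt (w : ℕ → ℕ → ℝ) {n k : ℕ} (hk : 1 ≤ k) (hkn : k < n) :
    minCost w n ≤ w k n + minCost w k := by
  obtain ⟨m, rfl⟩ : ∃ m, n = m + 2 := ⟨n - 2, by omega⟩
  rw [minCost]
  exact Finset.inf'_le _ (Finset.mem_attach _ ⟨k, Finset.mem_Icc.mpr ⟨hk, by omega⟩⟩)

lemma exists_minCost_eq (w : ℕ → ℕ → ℝ) {n : ℕ} (hn : 2 ≤ n) :
    ∃ k, 1 ≤ k ∧ k < n ∧ minCost w n = w k n + minCost w k := by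
  obtain ⟨m, rfl⟩ : ∃ m, n = m + 2 := ⟨n - 2, by omega⟩
  rw [minCost]
  obtain ⟨⟨k, hk⟩, -, hmin⟩ := Finset.exists_mem_eq_inf'
    ⟨⟨1, by simp⟩, Finset.mem_attach _ _⟩
    (fun k : Finset.Icc 1 (m + 1) ↦ w k.1 (m + 2) + minCost w k.1)
  obtain ⟨hk1, hkm⟩ := Finset.mem_Icc.mp hk
  exact ⟨k, hk1, by omega, hmin⟩

theorem stmt_1 (w : ℕ → ℕ → ℝ)
    (hpos : ∀ i j, 1 ≤ i → i < j → 0 < w i j)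
    (hmono : ∀ i j j', 1 ≤ i → i < j → j < j' → w i j < w i j') :
    ∀ n, 2 ≤ n → minCost w (n - 1) ≤ minCost w n := by
  intro n hn
  obtain ⟨k, hk, hkn, hmin⟩ := exists_minCost_eq w hn
  rw [hmin]
  obtain rfl | hk_lt : k = n - 1 ∨ k < n - 1 := by omega
  · linarith [hpos (n - 1) n hk hkn]
  · calc minCost w (n - 1) ≤ w k (n - 1) + minCost w k := minCost_le_of_lt w hk hk_lt
      _ ≤ w k n + minCost w k := by linarith [hmono k (n - 1) n hk hk_lt (by omega)]
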